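/- Let (R, A) be network data such that the static planning problem has a unique optimal solution (ρ*, x*) with ρ* = 1 and the dual problem has a unique optimal solution (y*, z*), which is nonnegative. Define V = {Ra : a ∈ 𝒜} ⊂ ℝ^ℐ and the hyperplane V° = {v ∈ ℝ^ℐ : Σ_i y*_i v_i = 0}. Then there exists δ > 0 such that every v ∈ V° with Euclidean norm ‖v‖ ≤ δ belongs to V. -/

import Mathlib

open Finset

section Network

variable {I J K : Type*} [Fintype I] [Fintype J] [Fintype K] [DecidableEq J] [DecidableEq K]

/-- Assumptions on the capacity consumption matrix `A`: entries in `{0,1}`;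
input processors only work on input activities and service processors only on
service activities; every activity uses some processor.  Here `JI` is the set
of input activities (service activities are its complement) and `KI` the set
of input processors (service processors are its complement). -/
def NetData (A : K → J → ℝ) (JI : Finset J) (KI : Finset K) : Prop :=
  (∀ k j, A k j = 0 ∨ A k j = 1) ∧
  (∀ k j, ((k ∈ KI ∧ j ∉ JI) ∨ (k ∉ KI ∧ j ∈ JI)) → A k j = 0) ∧
  (∀ j, ∃ k, A k j = 1)

/-- The allocation set `𝒜`. -/
def Alloc (A : K → J → ℝ) (KI : Finset K) : Set (J → ℝ) :=
  {a | (∀ j, 0 ≤ a j) ∧ (∀ k, ∑ j, A k j * a j ≤ 1) ∧ ∀ k ∈ KI, ∑ j, A k j * a j = 1}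

/-- Feasibility for the static planning problem. -/
def SPPfeas (R : I → J → ℝ) (A : K → J → ℝ) (KI : Finset K) (ρ : ℝ) (x : J → ℝ) : Prop :=
  (∀ i, ∑ j, R i j * x j = 0) ∧ (∀ k ∈ KI, ∑ j, A k j * x j = 1) ∧
  (∀ k, k ∉ KI → ∑ j, A k j * x j ≤ ρ) ∧ (∀ j, 0 ≤ x j)

/-- Optimality for the static planning problem (minimize `ρ`). -/
def SPPopt (R : I → J → ℝ) (A : K → J → ℝ) (KI : Finset K) (ρ : ℝ) (x : J → ℝ) : Prop :=
  SPPfeas R A KI ρ x ∧ ∀ ρ' x', SPPfeas R A KI ρ' x' → ρ ≤ ρ'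

/-- Unique optimality for the static planning problem. -/
def SPPuniqueOpt (R : I → J → ℝ) (A : K → J → ℝ) (KI : Finset K) (ρ : ℝ) (x : J → ℝ) : Prop :=
  SPPopt R A KI ρ x ∧ ∀ ρ' x', SPPopt R A KI ρ' x' → ρ' = ρ ∧ x' = x

/-- Feasibility for the dual of the static planning problem. -/
def Dfeas (R : I → J → ℝ) (A : K → J → ℝ) (JI : Finset J) (KI : Finset K)
    (y : I → ℝ) (z : K → ℝ) : Prop :=
  (∀ j ∈ JI, ∑ i, y i * R i j ≤ - ∑ k ∈ KI, z k * A k j) ∧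
  (∀ j, j ∉ JI → ∑ i, y i * R i j ≤ ∑ k ∈ KIᶜ, z k * A k j) ∧
  (∑ k ∈ KIᶜ, z k = 1) ∧ (∀ k, k ∉ KI → 0 ≤ z k)

/-- Optimality for the dual problem (maximize `∑_{k ∈ KI} z k`). -/
def Dopt (R : I → J → ℝ) (A : K → J → ℝ) (JI : Finset J) (KI : Finset K)
    (y : I → ℝ) (z : K → ℝ) : Prop :=
  Dfeas R A JI KI y z ∧
    ∀ y' z', Dfeas R A JI KI y' z' → ∑ k ∈ KI, z' k ≤ ∑ k ∈ KI, z k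

/-- Unique optimality for the dual problem. -/
def DuniqueOpt (R : I → J → ℝ) (A : K → J → ℝ) (JI : Finset J) (KI : Finset K)
    (y : I → ℝ) (z : K → ℝ) : Prop :=
  Dopt R A JI KI y z ∧ ∀ y' z', Dopt R A JI KI y' z' → y' = y ∧ z' = z

end Network

/-- The lifting vector `ζ^α` determined by `α` and the dual optimum `y`. -/
noncomputable def zeta {I : Type*} [Fintype I] (α y : I → ℝ) : I → ℝ :=
  fun i => (y i / α i) / ∑ i', (y i') ^ 2 / α i'

/-- A fluid model solution under the maximum pressure policy with parameter `α`. -/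
def FluidSol {I J K : Type*} [Fintype I] [Fintype J] [Fintype K] [DecidableEq J] [DecidableEq K]
    (R : I → J → ℝ) (A : K → J → ℝ) (KI : Finset K) (α : I → ℝ)
    (Z : ℝ → I → ℝ) (T : ℝ → J → ℝ) : Prop :=
  (∀ t, 0 ≤ t → ∀ i, Z t i = Z 0 i - ∑ j, R i j * T t j) ∧
  (∀ t, 0 ≤ t → ∀ i, 0 ≤ Z t i) ∧
  (∀ s t, 0 ≤ s → s ≤ t → ∀ k ∈ KI, ∑ j, A k j * (T t j - T s j) = t - s) ∧
  (∀ s t, 0 ≤ s → s ≤ t → ∀ k, ∑ j, A k j * (T t j - T s j) ≤ t - s) ∧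
  (∀ s t, 0 ≤ s → s ≤ t → ∀ j, T s j ≤ T t j) ∧
  (∀ j, T 0 j = 0) ∧
  (∀ t, 0 < t → ∀ (Z' : I → ℝ) (T' : J → ℝ),
    (∀ i, HasDerivAt (fun s => Z s i) (Z' i) t) →
    (∀ j, HasDerivAt (fun s => T s j) (T' j) t) →
    ∑ i, α i * Z t i * ∑ j, R i j * T' j =
      sSup ((fun a => ∑ i, α i * Z t i * ∑ j, R i j * a j) '' Alloc A KI))

/-!
`V = {R a : a ∈ 𝒜}` is convex and contains `R x* = 0`. A convex set `C ∋ 0` in a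
finite-dimensional inner product space is a neighbourhood of `0` as soon as every `c ≠ 0` has
`⟪c, w⟫ > 0` for some `w ∈ C`: otherwise either `C` spans a proper subspace, or `0` can be
separated from the (nonempty) interior of `C`. Applied inside the hyperplane `y*ᗮ`, it remains to
rule out some `c ⊥ y*`, `c ≠ 0`, with `c ⬝ R a ≤ 0` for all `a ∈ 𝒜` with `y* ⬝ R a = 0`.
For such a `c`, LP duality (Farkas' lemma, via the closedness of finitely generated cones) gives
multipliers `λ, w` with `c R ≤ w A + λ y* R`, `w ≥ 0` on service processors and `∑ w ≤ 0`.
Moving `(y*, z*)` along `(c - λ y*, ±w)` and renormalising yields a dual feasible point whose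
objective is, by weak duality `∑_{k ∈ 𝒦_I} z*_k ≤ 1`, no smaller. Uniqueness of the dual optimum
then forces `c ∥ y*`, hence `c = 0`.
-/

open Matrix
open scoped InnerProductSpace Topology

section ConeHull

variable {E ι : Type*}

theorem exists_linearIndepOn_sum_smul_eq [AddCommGroup E] [Module ℝ E] (v : ι → E)
    (s : Finset ι) (t : ι → ℝ) (ht : ∀ i ∈ s, 0 ≤ t i) :
    ∃ s' : Finset ι, ∃ t' : ι → ℝ, LinearIndepOn ℝ v (s' : Set ι) ∧ (∀ i ∈ s', 0 ≤ t' i) ∧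
      ∑ i ∈ s', t' i • v i = ∑ i ∈ s, t i • v i := by
  classical
  induction s using Finset.strongInduction generalizing t with
  | H s ih =>
  by_cases hs : LinearIndepOn ℝ v (s : Set ι)
  · exact ⟨s, t, hs, ht, rfl⟩
  obtain ⟨g, hg, hpos⟩ :
      ∃ g : ι → ℝ, ∑ i ∈ s, g i • v i = 0 ∧ (s.filter (0 < g ·)).Nonempty := by
    obtain ⟨g, hg, i, hi, hgi⟩ := not_linearIndepOn_finset_iff.1 hs
    rcases hgi.lt_or_gt with hneg | hpos
    · exact ⟨-g, by simp [hg], i, by simp [hi, hneg]⟩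
    · exact ⟨g, hg, i, by simp [hi, hpos]⟩
  -- decrease `t` along the relation `g` until the first coefficient vanishes
  obtain ⟨i₀, hi₀, hmin⟩ := (s.filter (0 < g ·)).exists_min_image (fun i => t i / g i) hpos
  rw [Finset.mem_filter] at hi₀
  set r := t i₀ / g i₀
  have hr : 0 ≤ r := div_nonneg (ht i₀ hi₀.1) hi₀.2.le
  have ht' : ∀ i ∈ s.erase i₀, 0 ≤ t i - r * g i := by
    intro i hi
    have hi := Finset.mem_of_mem_erase hi
    rcases le_or_gt (g i) 0 with hgi | hgi
    · nlinarith [ht i hi]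
    · have := hmin i (Finset.mem_filter.2 ⟨hi, hgi⟩)
      rw [le_div_iff₀ hgi] at this
      linarith
  obtain ⟨s', t', hind, hnn, hsum⟩ :=
    ih (s.erase i₀) (Finset.erase_ssubset hi₀.1) (fun i => t i - r * g i) ht'
  refine ⟨s', t', hind, hnn, hsum.trans ?_⟩
  rw [Finset.sum_erase _ (by simp [r, div_mul_cancel₀ _ hi₀.2.ne'])]
  simp [sub_smul, Finset.sum_sub_distrib, mul_smul, ← Finset.smul_sum, hg]

namespace PointedCone

variable [Fintype ι]

theorem mem_hull_range_iff [AddCommGroup E] [Module ℝ E] {v : ι → E} {x : E} :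
    x ∈ hull ℝ (Set.range v) ↔ ∃ t : ι → ℝ, 0 ≤ t ∧ ∑ i, t i • v i = x := by
  rw [Submodule.mem_span_range_iff_exists_fun]
  constructor
  · rintro ⟨c, rfl⟩
    exact ⟨fun i => c i, fun i => (c i).2, rfl⟩
  · rintro ⟨t, ht, rfl⟩
    exact ⟨fun i => ⟨t i, ht i⟩, rfl⟩

variable [NormedAddCommGroup E] [NormedSpace ℝ E]

theorem isClosed_hull_range_of_linearIndependent {v : ι → E} (hv : LinearIndependent ℝ v) :
    IsClosed (hull ℝ (Set.range v) : Set E) := by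
  have : (hull ℝ (Set.range v) : Set E) = Fintype.linearCombination ℝ v '' Set.Ici 0 := by
    ext x
    simp [mem_hull_range_iff, Fintype.linearCombination_apply]
  rw [this]
  exact (LinearMap.isClosedEmbedding_of_injective (LinearMap.ker_eq_bot.2
    (linearIndependent_iff_injective_fintypeLinearCombination.1 hv))).isClosedMap _ isClosed_Ici

theorem isClosed_hull_range (v : ι → E) : IsClosed (hull ℝ (Set.range v) : Set E) := by
  have : (hull ℝ (Set.range v) : Set E) =
      ⋃ s : {s : Finset ι // LinearIndepOn ℝ v (s : Set ι)},
        hull ℝ (Set.range fun i : s.1 => v i) := by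
    refine Set.Subset.antisymm (fun x hx => ?_)
      (Set.iUnion_subset fun s => Submodule.span_mono ?_)
    · obtain ⟨t, ht, rfl⟩ := mem_hull_range_iff.1 hx
      obtain ⟨s, t', hind, hnn, hsum⟩ :=
        exists_linearIndepOn_sum_smul_eq v Finset.univ t fun i _ => ht i
      refine Set.mem_iUnion.2
        ⟨⟨s, hind⟩, mem_hull_range_iff.2 ⟨fun i => t' i, fun i => hnn i i.2, ?_⟩⟩
      rw [← hsum, Finset.sum_coe_sort s fun i => t' i • v i]
    · exact Set.range_comp_subset_range _ v
  rw [this]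
  exact isClosed_iUnion_of_finite fun s => isClosed_hull_range_of_linearIndependent s.2

theorem mem_hull_range_of_forall_dual (v : ι → E) (b : E)
    (h : ∀ f : StrongDual ℝ E, (∀ i, 0 ≤ f (v i)) → 0 ≤ f b) : b ∈ hull ℝ (Set.range v) := by
  by_contra hb
  let C : ProperCone ℝ E := ⟨hull ℝ (Set.range v), isClosed_hull_range v⟩
  obtain ⟨f, hf, hfb⟩ := C.hyperplane_separation_point hb
  exact (h f fun i => hf _ (subset_hull ⟨i, rfl⟩)).not_gt hfb

end PointedCone

end ConeHull

namespace Matrix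

variable {m n p : Type*} [Fintype n]

theorem dotProduct_nonpos_of_mulVec_nonpos {G : Matrix m n ℝ} {β : m → ℝ} {c u : n → ℝ}
    {γ : ℝ} (hfeas : ∃ a, G *ᵥ a ≤ β) (h : ∀ a, G *ᵥ a ≤ β → c ⬝ᵥ a ≤ γ) (hu : G *ᵥ u ≤ 0) :
    c ⬝ᵥ u ≤ 0 := by
  obtain ⟨a₀, ha₀⟩ := hfeas
  by_contra! hcu
  set r := (γ - c ⬝ᵥ a₀ + 1) / (c ⬝ᵥ u)
  have hr : 0 ≤ r := div_nonneg (by linarith [h a₀ ha₀]) hcu.le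
  have := h (a₀ + r • u) (by
    rw [mulVec_add, mulVec_smul]
    simpa using add_le_add ha₀ (smul_le_smul_of_nonneg_left hu hr))
  rw [dotProduct_add, dotProduct_smul, smul_eq_mul, div_mul_cancel₀ _ hcu.ne'] at this
  linarith

variable [Fintype m] [Fintype p]

theorem exists_nonneg_vecMul_eq_of_forall_mulVec_nonneg (M : Matrix m n ℝ) (b : n → ℝ)
    (h : ∀ y, 0 ≤ M *ᵥ y → 0 ≤ b ⬝ᵥ y) : ∃ t, 0 ≤ t ∧ t ᵥ* M = b := by
  classical
  have hb : b ∈ PointedCone.hull ℝ (Set.range M) := by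
    refine PointedCone.mem_hull_range_of_forall_dual M b fun f hf => ?_
    have hf_eq : ∀ x, f x = x ⬝ᵥ fun j => f fun k => if j = k then 1 else 0 := fun x =>
      LinearMap.pi_apply_eq_sum_univ f.toLinearMap x
    rw [hf_eq]
    exact h _ fun i => (hf i).trans_eq (hf_eq (M i))
  obtain ⟨t, ht, htb⟩ := PointedCone.mem_hull_range_iff.1 hb
  exact ⟨t, ht, by rw [vecMul_eq_sum, htb]⟩

theorem exists_nonneg_vecMul_eq_of_forall_mulVec_le {G : Matrix m n ℝ} {β : m → ℝ} {c : n → ℝ}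
    {γ : ℝ} (hfeas : ∃ a, G *ᵥ a ≤ β) (h : ∀ a, G *ᵥ a ≤ β → c ⬝ᵥ a ≤ γ) :
    ∃ μ, 0 ≤ μ ∧ μ ᵥ* G = c ∧ μ ⬝ᵥ β ≤ γ := by
  have hdual : ∀ y : n ⊕ Unit → ℝ,
      0 ≤ fromBlocks (-G) (replicateCol Unit β) 0 (1 : Matrix Unit Unit ℝ) *ᵥ y →
      0 ≤ (-c ⊕ᵥ fun _ => γ) ⬝ᵥ y := by
    intro y hy
    rw [← Sum.elim_comp_inl_inr y, fromBlocks_mulVec, ← Sum.elim_zero_zero,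
      Sum.elim_le_elim_iff] at hy
    rw [← Sum.elim_comp_inl_inr y, sumElim_dotProduct_sumElim]
    set u := y ∘ Sum.inl
    set s := y (Sum.inr ())
    have hG : G *ᵥ u ≤ s • β := fun i => by
      have := hy.1 i
      simp [mulVec, dotProduct, replicateCol] at this ⊢
      linarith
    have hs : 0 ≤ s := by simpa using hy.2 ()
    have hγ : (fun _ : Unit => γ) ⬝ᵥ (y ∘ Sum.inr) = γ * s := by simp [dotProduct, s]
    rw [hγ, neg_dotProduct, ← sub_eq_neg_add, sub_nonneg]
    rcases hs.lt_or_eq with hs | hs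
    · have hsu : G *ᵥ (s⁻¹ • u) ≤ β := by
        rw [mulVec_smul]
        calc s⁻¹ • G *ᵥ u ≤ s⁻¹ • s • β := smul_le_smul_of_nonneg_left hG (inv_nonneg.2 hs.le)
          _ = β := by rw [smul_smul, inv_mul_cancel₀ hs.ne', one_smul]
      have := h _ hsu
      rw [dotProduct_smul, smul_eq_mul, inv_mul_le_iff₀ hs] at this
      linarith
    · rw [← hs, zero_smul] at hG
      rw [← hs, mul_zero]
      exact dotProduct_nonpos_of_mulVec_nonpos hfeas h hG
  obtain ⟨t, ht, htb⟩ := exists_nonneg_vecMul_eq_of_forall_mulVec_nonneg _ _ hdual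
  rw [vecMul_fromBlocks] at htb
  refine ⟨t ∘ Sum.inl, fun i => ht _, funext fun j => ?_, ?_⟩
  · simpa [vecMul_neg] using congrFun htb (Sum.inl j)
  · have := congrFun htb (Sum.inr ())
    simp [vecMul, dotProduct, replicateCol] at this
    change ∑ i, t (Sum.inl i) * β i ≤ γ
    linarith [show 0 ≤ t (Sum.inr ()) from ht _]

theorem exists_dual_feasible_le_of_forall_dotProduct_le {G : Matrix m n ℝ} {β : m → ℝ}
    {H : Matrix p n ℝ} {η : p → ℝ} {c : n → ℝ} {γ : ℝ}
    (hfeas : ∃ a, 0 ≤ a ∧ G *ᵥ a ≤ β ∧ H *ᵥ a = η)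
    (h : ∀ a, 0 ≤ a → G *ᵥ a ≤ β → H *ᵥ a = η → c ⬝ᵥ a ≤ γ) :
    ∃ μ ν, 0 ≤ μ ∧ c ≤ μ ᵥ* G + ν ᵥ* H ∧ μ ⬝ᵥ β + ν ⬝ᵥ η ≤ γ := by
  classical
  have hcon : ∀ a, fromRows (fromRows G (-1 : Matrix n n ℝ)) (fromRows H (-H)) *ᵥ a ≤
      (β ⊕ᵥ 0) ⊕ᵥ (η ⊕ᵥ -η) ↔ 0 ≤ a ∧ G *ᵥ a ≤ β ∧ H *ᵥ a = η := by
    intro a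
    simp only [fromRows_mulVec, Sum.elim_le_elim_iff, neg_mulVec, one_mulVec, neg_nonpos,
      neg_le_neg_iff, ← le_antisymm_iff]
    tauto
  obtain ⟨μ, hμ, hc, hval⟩ := exists_nonneg_vecMul_eq_of_forall_mulVec_le
    (hfeas.imp fun a ha => (hcon a).2 ha) fun a ha =>
      h a ((hcon a).1 ha).1 ((hcon a).1 ha).2.1 ((hcon a).1 ha).2.2
  refine ⟨(μ ∘ Sum.inl) ∘ Sum.inl, (μ ∘ Sum.inr) ∘ Sum.inl - (μ ∘ Sum.inr) ∘ Sum.inr,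
    fun i => hμ _, ?_, ?_⟩
  · rw [← hc, vecMul_fromRows, vecMul_fromRows, vecMul_fromRows, sub_vecMul, vecMul_neg,
      vecMul_neg, vecMul_one]
    intro j
    simp only [Pi.add_apply, Pi.neg_apply, Pi.sub_apply, Function.comp_apply]
    linarith [show (0 : ℝ) ≤ μ (Sum.inl (Sum.inr j)) from hμ _]
  · rw [← Sum.elim_comp_inl_inr μ, ← Sum.elim_comp_inl_inr (μ ∘ Sum.inl),
      ← Sum.elim_comp_inl_inr (μ ∘ Sum.inr)] at hval
    simp only [sumElim_dotProduct_sumElim, dotProduct_zero, dotProduct_neg] at hval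
    rw [sub_dotProduct]
    linarith

end Matrix

section InnerProductSpace

variable {E : Type*} [NormedAddCommGroup E] [InnerProductSpace ℝ E] [FiniteDimensional ℝ E]
  {C : Set E}

theorem Convex.mem_nhds_zero_of_forall_exists_inner_pos (hC : Convex ℝ C) (h0 : 0 ∈ C)
    (h : ∀ c ≠ 0, ∃ w ∈ C, 0 < ⟪c, w⟫_ℝ) : C ∈ 𝓝 0 := by
  have hspan : Submodule.span ℝ C = ⊤ := by
    by_contra hne
    obtain ⟨c, hc, hc0⟩ := (Submodule.ne_bot_iff _).1 (mt Submodule.orthogonal_eq_bot_iff.1 hne)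
    obtain ⟨w, hw, hpos⟩ := h c hc0
    exact hpos.ne' (Submodule.inner_left_of_mem_orthogonal (Submodule.subset_span hw) hc)
  have hint : (interior C).Nonempty := by
    rw [hC.interior_nonempty_iff_affineSpan_eq_top,
      AffineSubspace.affineSpan_eq_top_iff_vectorSpan_eq_top_of_nonempty ℝ E E ⟨0, h0⟩,
      vectorSpan_eq_span_vsub_set_right ℝ h0]
    simpa using hspan
  rw [← mem_interior_iff_mem_nhds]
  by_contra h0'
  obtain ⟨f, hf⟩ := geometric_hahn_banach_open_point hC.interior isOpen_interior h0'
  have hfC : ∀ w ∈ C, f w ≤ 0 := by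
    have : closure (interior C) ⊆ {w | f w ≤ 0} :=
      closure_minimal (fun w hw => by simpa using (hf w hw).le)
        (isClosed_le f.continuous continuous_const)
    rw [hC.closure_interior_eq_closure_of_nonempty_interior hint] at this
    exact fun w hw => this (subset_closure hw)
  obtain ⟨a, ha⟩ := hint
  have hf0 : f ≠ 0 := fun hf0 => by simpa [hf0] using hf a ha
  obtain ⟨w, hw, hpos⟩ := h ((InnerProductSpace.toDual ℝ E).symm f) (by simpa using hf0)
  rw [InnerProductSpace.toDual_symm_apply] at hpos
  exact (hfC w hw).not_gt hpos

theorem Submodule.exists_forall_norm_le_mem_of_forall_exists_inner_pos (H : Submodule ℝ E)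
    (hC : Convex ℝ C) (hCH : C ⊆ H) (h0 : 0 ∈ C) (h : ∀ c ∈ H, c ≠ 0 → ∃ w ∈ C, 0 < ⟪c, w⟫_ℝ) :
    ∃ δ > 0, ∀ v ∈ H, ‖v‖ ≤ δ → v ∈ C := by
  have hC' : ((↑) ⁻¹' C : Set H) ∈ 𝓝 0 := by
    refine (hC.linear_preimage H.subtype).mem_nhds_zero_of_forall_exists_inner_pos h0
      fun c hc => ?_
    obtain ⟨w, hw, hpos⟩ := h c c.2 (by simpa using hc)
    exact ⟨⟨w, hCH hw⟩, hw, hpos⟩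
  obtain ⟨ε, hε, hball⟩ := Metric.mem_nhds_iff.1 hC'
  refine ⟨ε / 2, half_pos hε, fun v hv hvδ => hball (a := ⟨v, hv⟩) ?_⟩
  rw [mem_ball_zero_iff, Submodule.coe_norm]
  linarith

end InnerProductSpace

section Network

theorem mem_Alloc_iff {J K : Type*} [Fintype J] {A : Matrix K J ℝ} {KI : Finset K}
    {a : J → ℝ} :
    a ∈ Alloc A KI ↔ 0 ≤ a ∧ A *ᵥ a ≤ 1 ∧ ∀ k ∈ KI, (A *ᵥ a) k = 1 := Iff.rfl

theorem convex_Alloc {J K : Type*} [Fintype J] (A : Matrix K J ℝ) (KI : Finset K) :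
    Convex ℝ (Alloc A KI) := by
  intro a ha b hb s t hs ht hst
  rw [mem_Alloc_iff] at ha hb ⊢
  simp only [mulVec_add, mulVec_smul]
  refine ⟨add_nonneg (smul_nonneg hs ha.1) (smul_nonneg ht hb.1), ?_, fun k hk => ?_⟩
  · calc s • A *ᵥ a + t • A *ᵥ b ≤ s • 1 + t • 1 :=
          add_le_add (smul_le_smul_of_nonneg_left ha.2.1 hs)
            (smul_le_smul_of_nonneg_left hb.2.1 ht)
      _ = 1 := by rw [← add_smul, hst, one_smul]
  · simp [ha.2.2 k hk, hb.2.2 k hk, hst]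

theorem SPPfeas.mem_Alloc {I J K : Type*} [Fintype J] {R : Matrix I J ℝ} {A : Matrix K J ℝ}
    {KI : Finset K} {x : J → ℝ} (hx : SPPfeas R A KI 1 x) : x ∈ Alloc A KI := by
  refine ⟨hx.2.2.2, fun k => ?_, hx.2.1⟩
  by_cases hk : k ∈ KI
  · exact (hx.2.1 k hk).le
  · exact hx.2.2.1 k hk

def negOn {K : Type*} [DecidableEq K] (KI : Finset K) (z : K → ℝ) : K → ℝ :=
  fun k => if k ∈ KI then -z k else z k

variable {I J K : Type*} [Fintype I] [Fintype K]
  {R : Matrix I J ℝ} {A : Matrix K J ℝ} {JI : Finset J} {KI : Finset K}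
  {x : J → ℝ} {y c : I → ℝ} {z w : K → ℝ} {lam N : ℝ}

theorem NetData.vecMul_apply_of_mem (hND : NetData A JI KI) (w : K → ℝ) {j : J}
    (hj : j ∈ JI) :
    (w ᵥ* A) j = ∑ k ∈ KI, w k * A k j :=
  (Finset.sum_subset (Finset.subset_univ KI) fun k _ hk => by
    simp [hND.2.1 k j (Or.inr ⟨hk, hj⟩)]).symm

variable [DecidableEq K]

theorem NetData.vecMul_apply_of_notMem (hND : NetData A JI KI) (w : K → ℝ) {j : J}
    (hj : j ∉ JI) :
    (w ᵥ* A) j = ∑ k ∈ KIᶜ, w k * A k j :=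
  (Finset.sum_subset (Finset.subset_univ KIᶜ) fun k _ hk => by
    simp [hND.2.1 k j (Or.inl ⟨by simpa using hk, hj⟩)]).symm

theorem NetData.dfeas_iff (hND : NetData A JI KI) :
    Dfeas R A JI KI y z ↔
      y ᵥ* R ≤ negOn KI z ᵥ* A ∧ ∑ k ∈ KIᶜ, z k = 1 ∧ ∀ k ∉ KI, 0 ≤ z k := by
  have hinput : ∀ j ∈ JI, (negOn KI z ᵥ* A) j = -∑ k ∈ KI, z k * A k j := fun j hj => by
    rw [hND.vecMul_apply_of_mem _ hj, ← Finset.sum_neg_distrib]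
    exact Finset.sum_congr rfl fun k hk => by simp [negOn, hk]
  have hservice : ∀ j ∉ JI, (negOn KI z ᵥ* A) j = ∑ k ∈ KIᶜ, z k * A k j := fun j hj => by
    rw [hND.vecMul_apply_of_notMem _ hj]
    exact Finset.sum_congr rfl fun k hk => by simp [negOn, Finset.mem_compl.1 hk]
  constructor
  · rintro ⟨hin, hserv, hnorm, hz⟩
    refine ⟨fun j => ?_, hnorm, hz⟩
    by_cases hj : j ∈ JI
    · exact (hin j hj).trans_eq (hinput j hj).symm
    · exact (hserv j hj).trans_eq (hservice j hj).symm
  · rintro ⟨h, hnorm, hz⟩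
    exact ⟨fun j hj => (h j).trans_eq (hinput j hj), fun j hj => (h j).trans_eq (hservice j hj),
      hnorm, hz⟩

theorem NetData.sum_input_le_one [Fintype J] (hND : NetData A JI KI) (hx : SPPfeas R A KI 1 x)
    (hyz : Dfeas R A JI KI y z) : ∑ k ∈ KI, z k ≤ 1 := by
  obtain ⟨hRx, hinput, hservice, hx0⟩ := hx
  obtain ⟨hdual, hnorm, hz⟩ := hND.dfeas_iff.1 hyz
  have hpos : 0 ≤ negOn KI z ⬝ᵥ A *ᵥ x :=
    calc 0 = y ⬝ᵥ R *ᵥ x := by rw [show R *ᵥ x = 0 from funext hRx, dotProduct_zero]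
      _ = y ᵥ* R ⬝ᵥ x := dotProduct_mulVec _ _ _
      _ ≤ negOn KI z ᵥ* A ⬝ᵥ x := dotProduct_le_dotProduct_of_nonneg_right hdual hx0
      _ = negOn KI z ⬝ᵥ A *ᵥ x := (dotProduct_mulVec _ _ _).symm
  have hsplit : negOn KI z ⬝ᵥ A *ᵥ x = -∑ k ∈ KI, z k + ∑ k ∈ KIᶜ, z k * (A *ᵥ x) k := by
    rw [dotProduct, ← Finset.sum_add_sum_compl KI, ← Finset.sum_neg_distrib]
    congr 1 <;> refine Finset.sum_congr rfl fun k hk => ?_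
    · simp [negOn, hk, mulVec, dotProduct, hinput k hk]
    · simp [negOn, Finset.mem_compl.1 hk]
  have hservice' : ∑ k ∈ KIᶜ, z k * (A *ᵥ x) k ≤ 1 := hnorm ▸ Finset.sum_le_sum fun k hk =>
    mul_le_of_le_one_right (hz k (Finset.mem_compl.1 hk)) (hservice k (Finset.mem_compl.1 hk))
  linarith

theorem NetData.dfeas_perturb (hND : NetData A JI KI) (hyz : Dfeas R A JI KI y z)
    (hw : ∀ k ∉ KI, 0 ≤ w k) (hcert : c ᵥ* R ≤ w ᵥ* A + lam • (y ᵥ* R))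
    (hN : 1 + ∑ k ∈ KIᶜ, w k = N) :
    Dfeas R A JI KI (N⁻¹ • ((1 - lam) • y + c)) (N⁻¹ • (z + negOn KI w)) := by
  obtain ⟨hdual, hnorm, hz⟩ := hND.dfeas_iff.1 hyz
  have hN0 : 0 < N := hN ▸ by
    linarith [Finset.sum_nonneg fun k hk => hw k (Finset.mem_compl.1 hk)]
  rw [hND.dfeas_iff]
  refine ⟨?_, ?_, fun k hk => ?_⟩
  · have hnegOn : negOn KI (N⁻¹ • (z + negOn KI w)) = N⁻¹ • (negOn KI z + w) := by
      ext k
      by_cases hk : k ∈ KI <;> simp [negOn, hk]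
      ring
    rw [hnegOn, smul_vecMul, smul_vecMul]
    refine smul_le_smul_of_nonneg_left ?_ (inv_nonneg.2 hN0.le)
    calc ((1 - lam) • y + c) ᵥ* R ≤ (1 - lam) • (y ᵥ* R) + (w ᵥ* A + lam • (y ᵥ* R)) := by
          rw [add_vecMul, smul_vecMul]
          exact add_le_add le_rfl hcert
      _ = y ᵥ* R + w ᵥ* A := by module
      _ ≤ negOn KI z ᵥ* A + w ᵥ* A := add_le_add hdual le_rfl
      _ = (negOn KI z + w) ᵥ* A := (add_vecMul _ _ _).symm
  · have : ∑ k ∈ KIᶜ, (z + negOn KI w) k = N := by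
      rw [← hN, ← hnorm, ← Finset.sum_add_distrib]
      exact Finset.sum_congr rfl fun k hk => by simp [negOn, Finset.mem_compl.1 hk]
    simp only [Pi.smul_apply, smul_eq_mul, ← Finset.mul_sum, this, inv_mul_cancel₀ hN0.ne']
  · simpa [negOn, hk] using mul_nonneg (inv_nonneg.2 hN0.le) (add_nonneg (hz k hk) (hw k hk))

theorem NetData.dopt_perturb [Fintype J] (hND : NetData A JI KI) (hx : SPPfeas R A KI 1 x)
    (hD : Dopt R A JI KI y z) (hw : ∀ k ∉ KI, 0 ≤ w k) (hsum : ∑ k, w k ≤ 0)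
    (hcert : c ᵥ* R ≤ w ᵥ* A + lam • (y ᵥ* R)) (hN : 1 + ∑ k ∈ KIᶜ, w k = N) :
    Dopt R A JI KI (N⁻¹ • ((1 - lam) • y + c)) (N⁻¹ • (z + negOn KI w)) := by
  refine ⟨hND.dfeas_perturb hD.1 hw hcert hN, fun y' z' h => (hD.2 y' z' h).trans ?_⟩
  have hz1 := hND.sum_input_le_one hx hD.1
  have ht0 : 0 ≤ ∑ k ∈ KIᶜ, w k := Finset.sum_nonneg fun k hk => hw k (Finset.mem_compl.1 hk)
  have hsplit := Finset.sum_add_sum_compl KI w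
  have hobj :
      ∑ k ∈ KI, (N⁻¹ • (z + negOn KI w)) k = N⁻¹ * (∑ k ∈ KI, z k - ∑ k ∈ KI, w k) := by
    simp only [Pi.smul_apply, smul_eq_mul, ← Finset.mul_sum, ← Finset.sum_sub_distrib]
    exact congrArg _ (Finset.sum_congr rfl fun k hk => by simp [negOn, hk, sub_eq_add_neg])
  have hN0 : 0 < N := by linarith
  rw [hobj, le_inv_mul_iff₀ hN0]
  nlinarith

theorem NetData.eq_smul_of_multipliers [Fintype J] (hND : NetData A JI KI)
    (hx : SPPfeas R A KI 1 x) (hD : DuniqueOpt R A JI KI y z) (hw : ∀ k ∉ KI, 0 ≤ w k)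
    (hsum : ∑ k, w k ≤ 0) (hcert : c ᵥ* R ≤ w ᵥ* A + lam • (y ᵥ* R)) : ∃ κ : ℝ, c = κ • y := by
  set N := 1 + ∑ k ∈ KIᶜ, w k with hN
  have hN0 : N ≠ 0 := by
    linarith [Finset.sum_nonneg fun k hk => hw k (Finset.mem_compl.1 hk)]
  have hy := (hD.2 _ _ (hND.dopt_perturb hx hD.1 hw hsum hcert hN.symm)).1
  rw [inv_smul_eq_iff₀ hN0] at hy
  refine ⟨N - 1 + lam, funext fun i => ?_⟩
  have := congrFun hy i
  simp only [Pi.add_apply, Pi.smul_apply, smul_eq_mul] at this ⊢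
  linarith

theorem exists_multipliers_of_forall_mem_Alloc [Fintype J] (hx : x ∈ Alloc A KI)
    (hxy : y ⬝ᵥ R *ᵥ x = 0)
    (h : ∀ a ∈ Alloc A KI, y ⬝ᵥ R *ᵥ a = 0 → c ⬝ᵥ R *ᵥ a ≤ 0) :
    ∃ (lam : ℝ) (w : K → ℝ), (∀ k ∉ KI, 0 ≤ w k) ∧ ∑ k, w k ≤ 0 ∧
      c ᵥ* R ≤ w ᵥ* A + lam • (y ᵥ* R) := by
  set χ : K → ℝ := fun k => if k ∈ KI then 1 else 0
  -- the rows of `diagonal χ * A` outside `KI` vanish and impose `0 = 0`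
  have hmem : ∀ a, a ∈ Alloc A KI ∧ y ⬝ᵥ R *ᵥ a = 0 ↔ 0 ≤ a ∧ A *ᵥ a ≤ 1 ∧
      fromRows (diagonal χ * A) (replicateRow Unit (y ᵥ* R)) *ᵥ a = χ ⊕ᵥ 0 := by
    intro a
    have hinput : (diagonal χ * A) *ᵥ a = χ ↔ ∀ k ∈ KI, (A *ᵥ a) k = 1 := by
      rw [← mulVec_mulVec, funext_iff]
      refine forall_congr' fun k => ?_
      by_cases hk : k ∈ KI <;> simp [mulVec_diagonal, χ, hk]
    have hy : replicateRow Unit (y ᵥ* R) *ᵥ a = 0 ↔ y ⬝ᵥ R *ᵥ a = 0 := by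
      rw [dotProduct_mulVec, replicateRow_mulVec_eq_const, funext_iff]
      simp
    rw [mem_Alloc_iff, fromRows_mulVec, Sum.elim_eq_iff, hinput, hy]
    tauto
  obtain ⟨μ, ν, hμ, hcert, hval⟩ :=
    exists_dual_feasible_le_of_forall_dotProduct_le (γ := 0) (c := c ᵥ* R)
      ⟨x, (hmem x).1 ⟨hx, hxy⟩⟩ fun a ha hA hH => by
        rw [← dotProduct_mulVec]
        exact h a ((hmem a).2 ⟨ha, hA, hH⟩).1 ((hmem a).2 ⟨ha, hA, hH⟩).2
  rw [← Sum.elim_comp_inl_inr ν, sumElim_dotProduct_sumElim, dotProduct_zero, add_zero] at hval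
  rw [← Sum.elim_comp_inl_inr ν, sumElim_vecMul_fromRows, ← vecMul_vecMul] at hcert
  refine ⟨ν (Sum.inr ()), μ + ν ∘ Sum.inl * χ, fun k hk => ?_, ?_, ?_⟩
  · simpa [χ, hk] using hμ k
  · simpa only [dotProduct, Pi.one_apply, mul_one, Pi.add_apply, Pi.mul_apply,
      Finset.sum_add_distrib] using hval
  · convert hcert using 1
    ext j
    simp [vecMul, dotProduct, replicateRow, add_mul, Finset.sum_add_distrib, mul_assoc,
      add_assoc]

theorem NetData.exists_mem_Alloc_dotProduct_pos [Fintype J]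
    (hND : NetData A JI KI) (hx : SPPfeas R A KI 1 x) (hD : DuniqueOpt R A JI KI y z)
    (hcy : y ⬝ᵥ c = 0) (hc : c ≠ 0) :
    ∃ a ∈ Alloc A KI, y ⬝ᵥ R *ᵥ a = 0 ∧ 0 < c ⬝ᵥ R *ᵥ a := by
  by_contra! hle
  obtain ⟨lam, w, hw, hsum, hcert⟩ := exists_multipliers_of_forall_mem_Alloc hx.mem_Alloc
    (by rw [show R *ᵥ x = 0 from funext hx.1, dotProduct_zero]) hle
  obtain ⟨κ, rfl⟩ := hND.eq_smul_of_multipliers hx hD hw hsum hcert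
  rw [dotProduct_smul, smul_eq_mul, mul_eq_zero, dotProduct_self_eq_zero] at hcy
  rcases hcy with rfl | rfl
  · exact hc (zero_smul _ _)
  · exact hc (smul_zero _)

end Network

theorem rate_set_contains_neighborhood_general {I J K : Type*} [Fintype I] [Fintype J] [Fintype K] [DecidableEq K]
    (R : I → J → ℝ) (A : K → J → ℝ) (JI : Finset J) (KI : Finset K)
    (hND : NetData A JI KI)
    (xstar : J → ℝ) (hSPP : SPPuniqueOpt R A KI 1 xstar)
    (ystar : I → ℝ) (zstar : K → ℝ) (hD : DuniqueOpt R A JI KI ystar zstar) :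
    ∃ δ : ℝ, 0 < δ ∧
      ∀ v : I → ℝ, (∑ i, ystar i * v i = 0) → Real.sqrt (∑ i, v i ^ 2) ≤ δ →
        v ∈ (fun a => fun i => ∑ j, R i j * a j) '' Alloc A KI := by
  have hx := hSPP.1.1
  let L : (J → ℝ) →ₗ[ℝ] EuclideanSpace ℝ I :=
    (WithLp.linearEquiv 2 ℝ (I → ℝ)).symm.toLinearMap ∘ₗ mulVecLin R
  set H := (ℝ ∙ WithLp.toLp 2 ystar)ᗮ
  have hH : ∀ v : I → ℝ, WithLp.toLp 2 v ∈ H ↔ ystar ⬝ᵥ v = 0 := fun v => by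
    simp [H, Submodule.mem_orthogonal_singleton_iff_inner_right,
      EuclideanSpace.inner_eq_star_dotProduct, dotProduct_comm]
  set C := L '' Alloc A KI ∩ H
  have hpos : ∀ c ∈ H, c ≠ 0 → ∃ w ∈ C, 0 < ⟪c, w⟫_ℝ := fun c hc hc0 => by
    obtain ⟨a, ha, hya, hca⟩ := hND.exists_mem_Alloc_dotProduct_pos hx hD (c := c.ofLp)
      ((hH _).1 hc) (by simpa using hc0)
    refine ⟨L a, ⟨⟨a, ha, rfl⟩, (hH _).2 hya⟩, ?_⟩
    change 0 < ⟪c, WithLp.toLp 2 (R *ᵥ a)⟫_ℝ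
    simpa [EuclideanSpace.inner_eq_star_dotProduct, dotProduct_comm] using hca
  have hx0 : L xstar = 0 := by
    change WithLp.toLp 2 (R *ᵥ xstar) = 0
    rw [show R *ᵥ xstar = 0 from funext hx.1, WithLp.toLp_zero]
  obtain ⟨δ, hδ, hball⟩ := H.exists_forall_norm_le_mem_of_forall_exists_inner_pos
    (((convex_Alloc A KI).linear_image L).inter H.convex) Set.inter_subset_right
    ⟨⟨xstar, hx.mem_Alloc, hx0⟩, H.zero_mem⟩ hpos
  refine ⟨δ, hδ, fun v hv hvδ => ?_⟩
  obtain ⟨⟨a, ha, hav⟩, -⟩ :=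
    hball _ ((hH v).2 hv) (by simpa [EuclideanSpace.norm_eq] using hvδ)
  exact ⟨a, ha, congrArg WithLp.ofLp hav⟩

/-- Lemma 5: under complete resource pooling, the set `V = {Ra : a ∈ 𝒜}`
contains a `δ`-neighborhood of the origin inside the hyperplane `y* · v = 0`. -/
theorem rate_set_contains_neighborhood {I J K : Type*} [Fintype I] [Fintype J] [Fintype K] [DecidableEq J] [DecidableEq K]
    (R : I → J → ℝ) (A : K → J → ℝ) (JI : Finset J) (KI : Finset K)
    (hND : NetData A JI KI)
    (xstar : J → ℝ) (hSPP : SPPuniqueOpt R A KI 1 xstar)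
    (ystar : I → ℝ) (zstar : K → ℝ) (hD : DuniqueOpt R A JI KI ystar zstar)
    (hynn : ∀ i, 0 ≤ ystar i) (hznn : ∀ k, 0 ≤ zstar k) :
    ∃ δ : ℝ, 0 < δ ∧
      ∀ v : I → ℝ, (∑ i, ystar i * v i = 0) → Real.sqrt (∑ i, v i ^ 2) ≤ δ →
        v ∈ (fun a => fun i => ∑ j, R i j * a j) '' Alloc A KI :=
  rate_set_contains_neighborhood_general R A JI KI hND xstar hSPP ystar zstar hD
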